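/- arXiv:1611.01420 — 3 statements merged into one kernel-verified Lean document; each statement's English description precedes it below -/
import Mathlib

section
/- Let λ be a real number, let Q : ℝ³ → ℂ³ and v : ℝ³ → ℂ be twice continuously differentiable on ℝ³, and suppose the consistency condition ∇·Q = iλv holds together with the vector Helmholtz equations ΔQ = −λ²Q (componentwise) and Δv = −λ²v. Then the field B := iλQ − ∇v + i∇×Q satisfies ∇×B = λB and ∇·B = 0 everywhere on ℝ³. -/
/-- The `i`-th partial derivative of a complex-valued function on `ℝ³`. -/
noncomputable def pd (i : Fin 3) (f : (Fin 3 → ℝ) → ℂ) (x : Fin 3 → ℝ) : ℂ :=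
  fderiv ℝ f x (Pi.single i 1)

/-- The curl of a complex vector field on `ℝ³`, defined componentwise. -/
noncomputable def curl (F : (Fin 3 → ℝ) → (Fin 3 → ℂ)) (x : Fin 3 → ℝ) : Fin 3 → ℂ :=
  ![pd 1 (fun y => F y 2) x - pd 2 (fun y => F y 1) x,
    pd 2 (fun y => F y 0) x - pd 0 (fun y => F y 2) x,
    pd 0 (fun y => F y 1) x - pd 1 (fun y => F y 0) x]

/-- The divergence of a complex vector field on `ℝ³`. -/
noncomputable def diverg (F : (Fin 3 → ℝ) → (Fin 3 → ℂ)) (x : Fin 3 → ℝ) : ℂ :=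
  pd 0 (fun y => F y 0) x + pd 1 (fun y => F y 1) x + pd 2 (fun y => F y 2) x

/-- The Laplacian `∂₁² + ∂₂² + ∂₃²` of a complex-valued function on `ℝ³`. -/
noncomputable def lap (f : (Fin 3 → ℝ) → ℂ) (x : Fin 3 → ℝ) : ℂ :=
  pd 0 (pd 0 f) x + pd 1 (pd 1 f) x + pd 2 (pd 2 f) x

/-! Write `B = iλQ − ∇v + i∇×Q`. By symmetry of second derivatives, `∇×∇v = 0`, `∇·(∇×Q) = 0` and
`∇×(∇×Q) = ∇(∇·Q) − ΔQ`. The consistency condition turns `∇(∇·Q)` into `iλ∇v` and the Helmholtz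
equations turn `ΔQ`, `Δv` into `−λ²Q`, `−λ²v`, so
`∇×B = iλ∇×Q + i(iλ∇v + λ²Q) = λB` and `∇·B = iλ(iλv) + λ²v = 0`. -/

section PartialDerivative

variable {f g : (Fin 3 → ℝ) → ℂ} {x : Fin 3 → ℝ}

lemma pd_add (hf : DifferentiableAt ℝ f x) (hg : DifferentiableAt ℝ g x) (i : Fin 3) :
    pd i (fun y => f y + g y) x = pd i f x + pd i g x := by
  simp [pd, fderiv_fun_add hf hg]

lemma pd_sub (hf : DifferentiableAt ℝ f x) (hg : DifferentiableAt ℝ g x) (i : Fin 3) :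
    pd i (fun y => f y - g y) x = pd i f x - pd i g x := by
  simp [pd, fderiv_fun_sub hf hg]

lemma pd_const_mul (hf : DifferentiableAt ℝ f x) (c : ℂ) (i : Fin 3) :
    pd i (fun y => c * f y) x = c * pd i f x := by
  simp [pd, fderiv_const_mul hf]

lemma ContDiffAt.pd {m n : WithTop ℕ∞} (hf : ContDiffAt ℝ n f x) (hmn : m + 1 ≤ n) (i : Fin 3) :
    ContDiffAt ℝ m (pd i f) x :=
  (hf.fderiv_right hmn).clm_apply contDiffAt_const

lemma pd_pd (hf : ContDiffAt ℝ 2 f x) (i j : Fin 3) :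
    pd i (pd j f) x = fderiv ℝ (fderiv ℝ f) x (Pi.single i 1) (Pi.single j 1) := by
  have hdf : DifferentiableAt ℝ (fderiv ℝ f) x :=
    (hf.fderiv_right (m := 1) le_rfl).differentiableAt one_ne_zero
  change fderiv ℝ (fun y => fderiv ℝ f y (Pi.single j 1)) x (Pi.single i 1) = _
  simp [fderiv_clm_apply hdf (differentiableAt_const _)]

lemma pd_comm (hf : ContDiffAt ℝ 2 f x) (i j : Fin 3) : pd i (pd j f) x = pd j (pd i f) x := by
  rw [pd_pd hf, pd_pd hf]
  exact hf.isSymmSndFDerivAt (by simp) _ _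

end PartialDerivative

noncomputable def grad (v : (Fin 3 → ℝ) → ℂ) (x : Fin 3 → ℝ) : Fin 3 → ℂ := fun i => pd i v x

section VectorCalculus

variable {F G : (Fin 3 → ℝ) → (Fin 3 → ℂ)} {v : (Fin 3 → ℝ) → ℂ} {x : Fin 3 → ℝ}

lemma curl_add (hF : DifferentiableAt ℝ F x) (hG : DifferentiableAt ℝ G x) :
    curl (fun y => F y + G y) x = curl F x + curl G x := by
  have h := fun j => pd_add (differentiableAt_pi.1 hF j) (differentiableAt_pi.1 hG j)
  ext i; fin_cases i <;> simp [curl, h] <;> ring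

lemma curl_sub (hF : DifferentiableAt ℝ F x) (hG : DifferentiableAt ℝ G x) :
    curl (fun y => F y - G y) x = curl F x - curl G x := by
  have h := fun j => pd_sub (differentiableAt_pi.1 hF j) (differentiableAt_pi.1 hG j)
  ext i; fin_cases i <;> simp [curl, h] <;> ring

lemma curl_const_smul (hF : DifferentiableAt ℝ F x) (c : ℂ) :
    curl (fun y => c • F y) x = c • curl F x := by
  have h := fun j => pd_const_mul (differentiableAt_pi.1 hF j) c
  ext i; fin_cases i <;> simp [curl, h] <;> ring

lemma diverg_add (hF : DifferentiableAt ℝ F x) (hG : DifferentiableAt ℝ G x) :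
    diverg (fun y => F y + G y) x = diverg F x + diverg G x := by
  have h := fun j => pd_add (differentiableAt_pi.1 hF j) (differentiableAt_pi.1 hG j)
  simp [diverg, h]; ring

lemma diverg_sub (hF : DifferentiableAt ℝ F x) (hG : DifferentiableAt ℝ G x) :
    diverg (fun y => F y - G y) x = diverg F x - diverg G x := by
  have h := fun j => pd_sub (differentiableAt_pi.1 hF j) (differentiableAt_pi.1 hG j)
  simp [diverg, h]; ring

lemma diverg_const_smul (hF : DifferentiableAt ℝ F x) (c : ℂ) :
    diverg (fun y => c • F y) x = c * diverg F x := by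
  have h := fun j => pd_const_mul (differentiableAt_pi.1 hF j) c
  simp [diverg, h]; ring

lemma ContDiffAt.grad {m n : WithTop ℕ∞} (hv : ContDiffAt ℝ n v x) (hmn : m + 1 ≤ n) :
    ContDiffAt ℝ m (grad v) x :=
  contDiffAt_pi.2 fun i => hv.pd hmn i

lemma ContDiffAt.curl {m n : WithTop ℕ∞} (hF : ContDiffAt ℝ n F x) (hmn : m + 1 ≤ n) :
    ContDiffAt ℝ m (curl F) x := by
  have h j i := (contDiffAt_pi.1 hF j).pd hmn i
  refine contDiffAt_pi.2 fun i => ?_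
  fin_cases i
  exacts [(h 2 1).sub (h 1 2), (h 0 2).sub (h 2 0), (h 1 0).sub (h 0 1)]

lemma pd_sub_pd (hF : ContDiffAt ℝ 2 F x) (i a b c d : Fin 3) :
    pd i (fun y => pd a (fun z => F z b) y - pd c (fun z => F z d) y) x
      = pd i (pd a (fun z => F z b)) x - pd i (pd c (fun z => F z d)) x :=
  pd_sub (((contDiffAt_pi.1 hF b).pd (m := 1) le_rfl a).differentiableAt one_ne_zero)
    (((contDiffAt_pi.1 hF d).pd (m := 1) le_rfl c).differentiableAt one_ne_zero) i

lemma pd_diverg (hF : ContDiffAt ℝ 2 F x) (i : Fin 3) :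
    pd i (diverg F) x = pd i (pd 0 (fun y => F y 0)) x + pd i (pd 1 (fun y => F y 1)) x
      + pd i (pd 2 (fun y => F y 2)) x := by
  have h j := ((contDiffAt_pi.1 hF j).pd (m := 1) le_rfl j).differentiableAt one_ne_zero
  change pd i (fun y => pd 0 (fun y => F y 0) y + pd 1 (fun y => F y 1) y
    + pd 2 (fun y => F y 2) y) x = _
  rw [pd_add ((h 0).fun_add (h 1)) (h 2), pd_add (h 0) (h 1)]

lemma curl_grad (hv : ContDiffAt ℝ 2 v x) : curl (grad v) x = 0 := by
  ext i; fin_cases i <;> simp [curl, grad, pd_comm hv]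

lemma diverg_grad : diverg (grad v) x = lap v x := rfl

lemma diverg_curl (hF : ContDiffAt ℝ 2 F x) : diverg (curl F) x = 0 := by
  have h k := pd_comm (contDiffAt_pi.1 hF k)
  simp [diverg, curl, pd_sub_pd hF, h]

lemma curl_curl (hF : ContDiffAt ℝ 2 F x) :
    curl (curl F) x = grad (diverg F) x - fun i => lap (fun y => F y i) x := by
  have h k := pd_comm (contDiffAt_pi.1 hF k)
  ext i; fin_cases i <;> simp [curl, grad, lap, pd_sub_pd hF, pd_diverg hF]
  · linear_combination h 1 1 0 + h 2 2 0
  · linear_combination h 2 2 1 + h 0 0 1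
  · linear_combination h 0 0 2 + h 1 1 2

end VectorCalculus

/-- the generalized Debye representation `B = iλQ − ∇v + i∇×Q`, with the
consistency condition `∇·Q = iλv` and the Helmholtz equations for `Q` and `v`,
yields a divergence-free Beltrami field: `∇×B = λB` and `∇·B = 0`. -/
theorem debye_representation_gives_beltrami (lam : ℝ)
    (Q : (Fin 3 → ℝ) → (Fin 3 → ℂ)) (v : (Fin 3 → ℝ) → ℂ)
    (hQ : ContDiff ℝ 2 Q) (hv : ContDiff ℝ 2 v)
    (hconsist : ∀ x, diverg Q x = Complex.I * lam * v x)
    (hQHelm : ∀ x, ∀ i : Fin 3, lap (fun y => Q y i) x = -(lam : ℂ) ^ 2 * Q x i)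
    (hvHelm : ∀ x, lap v x = -(lam : ℂ) ^ 2 * v x)
    (B : (Fin 3 → ℝ) → (Fin 3 → ℂ))
    (hBdef : B = fun x i => Complex.I * lam * Q x i - pd i v x + Complex.I * curl Q x i) :
    ∀ x, curl B x = (lam : ℂ) • B x ∧ diverg B x = 0 := by
  have hB : B = fun y => (Complex.I * lam) • Q y - grad v y + Complex.I • curl Q y := hBdef
  intro x
  have hQx : ContDiffAt ℝ 2 Q x := hQ.contDiffAt
  have hvx : ContDiffAt ℝ 2 v x := hv.contDiffAt
  have hdQ : DifferentiableAt ℝ Q x := hQx.differentiableAt two_ne_zero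
  have hdQ' : DifferentiableAt ℝ (fun y => (Complex.I * lam) • Q y) x := hdQ.fun_const_smul _
  have hdgrad : DifferentiableAt ℝ (grad v) x :=
    (hvx.grad (m := 1) le_rfl).differentiableAt one_ne_zero
  have hdcurl : DifferentiableAt ℝ (curl Q) x :=
    (hQx.curl (m := 1) le_rfl).differentiableAt one_ne_zero
  have hgrad_diverg : grad (diverg Q) x = (Complex.I * lam) • grad v x := by
    ext i
    simp only [grad, funext hconsist]
    exact pd_const_mul (hv.differentiable two_ne_zero x) _ i
  have hlap : (fun i => lap (fun y => Q y i) x) = -(lam : ℂ) ^ 2 • Q x := funext (hQHelm x)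
  rw [hB]
  constructor
  · rw [curl_add (hdQ'.fun_sub hdgrad) (hdcurl.fun_const_smul _), curl_sub hdQ' hdgrad,
      curl_const_smul hdQ, curl_const_smul hdcurl, curl_grad hvx, curl_curl hQx, hgrad_diverg,
      hlap]
    ext i
    simp only [sub_zero, neg_smul, sub_neg_eq_add, smul_add, Pi.add_apply, Pi.smul_apply,
      smul_eq_mul, Pi.sub_apply]
    linear_combination (lam * grad v x i) * Complex.I_sq
  · rw [diverg_add (hdQ'.fun_sub hdgrad) (hdcurl.fun_const_smul _), diverg_sub hdQ' hdgrad,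
      diverg_const_smul hdQ, diverg_const_smul hdcurl, diverg_grad, diverg_curl hQx, hconsist,
      hvHelm]
    linear_combination (lam ^ 2 * v x) * Complex.I_sq
end

section
/- Let r > 0, r' > 0 and z, z' ∈ ℝ with (r, z) ≠ (r', z'). Define R(θ) = √(r² + r'² − 2rr'cos θ + (z−z')²), χ = (r² + r'² + (z−z')²)/(2rr'), and k = √(2/(1+χ)). Then ∫_{−π}^{π} dθ / R(θ) = (2k/√(rr')) · K(k), where K(k) = ∫_0^{π/2} dθ / √(1 − k² sin²θ) is the complete elliptic integral of the first kind. -/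
/-!
Since `cos θ = 2 cos² (θ/2) - 1`, the squared distance is
`A - B cos θ = (A + B) (1 - m cos² (θ/2))` with `A = r² + r'² + (z - z')²`, `B = 2 r r'` and
`m = 2B/(A + B) = k²`. Substituting `θ = 2u`, folding `[-π/2, π/2]` onto `[0, π/2]` by evenness and
replacing `u` by `π/2 - u` turns `∫_{-π}^{π} dθ / R(θ)` into `4 K(k) / √(A + B)`, and
`√(A + B) k = 2 √(r r')`.
-/

open Real

theorem intervalIntegral.integral_neg_self_of_even {E : Type*} [NormedAddCommGroup E]
    [NormedSpace ℝ E] {f : ℝ → E} (hf : Continuous f) (heven : ∀ x, f (-x) = f x) (a : ℝ) :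
    ∫ x in -a..a, f x = (2 : ℝ) • ∫ x in 0..a, f x := by
  have hneg : ∫ x in -a..0, f x = ∫ x in 0..a, f x := by
    simpa [heven] using (intervalIntegral.integral_comp_neg (a := 0) (b := a) f).symm
  rw [← intervalIntegral.integral_add_adjacent_intervals (hf.intervalIntegrable _ 0)
    (hf.intervalIntegrable 0 _), hneg, two_smul]

theorem integral_comp_cos_half (g : ℝ → ℝ) (hg : ContinuousOn g (Set.Icc (-1) 1)) :
    ∫ θ in -π..π, g (cos (θ / 2)) = 4 * ∫ u in 0..π / 2, g (sin u) := by
  have hgcos : Continuous fun u => g (cos u) :=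
    hg.comp_continuous continuous_cos fun u => ⟨neg_one_le_cos u, cos_le_one u⟩
  calc ∫ θ in -π..π, g (cos (θ / 2))
      = 2 * ∫ u in -(π / 2)..π / 2, g (cos u) := by
        rw [intervalIntegral.integral_comp_div (fun u => g (cos u)) two_ne_zero, neg_div,
          smul_eq_mul]
    _ = 4 * ∫ u in 0..π / 2, g (cos u) := by
        rw [intervalIntegral.integral_neg_self_of_even hgcos (by simp), smul_eq_mul]; ring
    _ = 4 * ∫ u in 0..π / 2, g (sin u) := by
        simpa [cos_pi_div_two_sub] using
          (intervalIntegral.integral_comp_sub_left (fun u => g (cos u)) (π / 2)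
            (a := 0) (b := π / 2)).symm

theorem one_sub_mul_sq_pos {m t : ℝ} (hm : m < 1) (ht : t ^ 2 ≤ 1) : 0 < 1 - m * t ^ 2 := by
  rcases le_or_gt m 0 with h | h <;> nlinarith [sq_nonneg t]

theorem sub_mul_cos_eq (A B θ : ℝ) (h : A + B ≠ 0) :
    A - B * cos θ = (A + B) * (1 - 2 * B / (A + B) * cos (θ / 2) ^ 2) := by
  have hcos : cos θ = 2 * cos (θ / 2) ^ 2 - 1 := by
    rw [← cos_two_mul, mul_div_cancel₀ θ two_ne_zero]
  rw [hcos]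
  field_simp
  ring

theorem integral_inv_sqrt_sub_mul_cos {A B : ℝ} (hAB : |B| < A) :
    ∫ θ in -π..π, 1 / √(A - B * cos θ) =
      4 / √(A + B) * ∫ u in 0..π / 2, 1 / √(1 - 2 * B / (A + B) * sin u ^ 2) := by
  obtain ⟨hBA, hnegBA⟩ := abs_lt.1 hAB
  have hsum : 0 < A + B := by linarith
  have hm : 2 * B / (A + B) < 1 := by rw [div_lt_one hsum]; linarith
  set g : ℝ → ℝ := fun t => 1 / √(1 - 2 * B / (A + B) * t ^ 2)
  have hg : ContinuousOn g (Set.Icc (-1) 1) := by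
    refine continuousOn_const.div (by fun_prop) fun t ht => ?_
    exact (sqrt_pos.2 (one_sub_mul_sq_pos hm (sq_le_one_iff_abs_le_one t |>.2
      (abs_le.2 ht)))).ne'
  calc ∫ θ in -π..π, 1 / √(A - B * cos θ)
      = ∫ θ in -π..π, 1 / √(A + B) * g (cos (θ / 2)) := by
        refine intervalIntegral.integral_congr fun θ _ => ?_
        simp only [g, sub_mul_cos_eq A B θ hsum.ne', sqrt_mul hsum.le, one_div, mul_inv]
    _ = 4 / √(A + B) * ∫ u in 0..π / 2, g (sin u) := by
        rw [intervalIntegral.integral_const_mul, integral_comp_cos_half g hg]; ring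

theorem two_mul_mul_lt_of_ne {r r' z z' : ℝ} (hne : (r, z) ≠ (r', z')) :
    2 * r * r' < r ^ 2 + r' ^ 2 + (z - z') ^ 2 := by
  have h : r - r' ≠ 0 ∨ z - z' ≠ 0 := by
    by_contra! h
    exact hne (Prod.ext (sub_eq_zero.1 h.1) (sub_eq_zero.1 h.2))
  rcases h with h | h <;> nlinarith [sq_pos_of_ne_zero h, sq_nonneg (r - r'), sq_nonneg (z - z')]

/-- the axisymmetric (`ℓ = 0`) modal Green's function of the Laplace kernel
in cylindrical coordinates, expressed via the complete elliptic integral of the first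
kind: `∫_{−π}^{π} dθ/R(θ) = (2k/√(rr')) K(k)`. -/
theorem laplace_modal_kernel_elliptic_K
    (r r' z z' : ℝ) (hr : 0 < r) (hr' : 0 < r') (hne : (r, z) ≠ (r', z'))
    (R : ℝ → ℝ)
    (hR : R = fun θ => Real.sqrt (r ^ 2 + r' ^ 2 - 2 * r * r' * Real.cos θ + (z - z') ^ 2))
    (χ k : ℝ)
    (hχ : χ = (r ^ 2 + r' ^ 2 + (z - z') ^ 2) / (2 * r * r'))
    (hk : k = Real.sqrt (2 / (1 + χ)))
    (K : ℝ)
    (hK : K = ∫ θ in (0 : ℝ)..(Real.pi / 2),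
      1 / Real.sqrt (1 - k ^ 2 * Real.sin θ ^ 2)) :
    (∫ θ in (-Real.pi)..Real.pi, 1 / R θ) = 2 * k / Real.sqrt (r * r') * K := by
  set A := r ^ 2 + r' ^ 2 + (z - z') ^ 2
  have hB : 0 < 2 * r * r' := by positivity
  have hA : 2 * r * r' < A := two_mul_mul_lt_of_ne hne
  have hk2 : k ^ 2 = 2 * (2 * r * r') / (A + 2 * r * r') := by
    rw [hk, sq_sqrt (by rw [hχ]; positivity), hχ]
    field_simp
    ring
  have hk0 : 0 ≤ k := hk ▸ sqrt_nonneg _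
  have hkA : k * √(A + 2 * r * r') = 2 * √(r * r') := by
    rw [← sqrt_sq hk0, ← sqrt_mul (sq_nonneg k), hk2,
      div_mul_cancel₀ _ (by linarith), show 2 * (2 * r * r') = 2 ^ 2 * (r * r') by ring,
      sqrt_mul (by norm_num), sqrt_sq (by norm_num)]
  have hR' : R = fun θ => √(A - 2 * r * r' * cos θ) := by
    rw [hR]; ext θ; congr 1; ring
  rw [hR', integral_inv_sqrt_sub_mul_cos (by rwa [abs_of_pos hB]), hK, hk2]
  congr 1
  rw [div_eq_div_iff (sqrt_pos.2 (by linarith)).ne' (sqrt_pos.2 (by positivity)).ne']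
  linear_combination (-2) * hkA
end

section
/- Let r > 0, r' > 0 and z, z' ∈ ℝ with (r, z) ≠ (r', z'). Define R(θ) = √(r² + r'² − 2rr'cos θ + (z−z')²), χ = (r² + r'² + (z−z')²)/(2rr'), and k = √(2/(1+χ)). Then ∫_{−π}^{π} cos θ dθ / R(θ) = (2/√(rr')) · ( χ k K(k) − (2/k) E(k) ), where K(k) = ∫_0^{π/2} dθ / √(1 − k² sin²θ) and E(k) = ∫_0^{π/2} √(1 − k² sin²θ) dθ are the complete elliptic integrals of the first and second kind. -/
/-!
Since `R θ ^ 2 = 2 r r' (χ - cos θ)`, the integral is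
`(2 r r')^(-1/2) ∫ cos θ / √(χ - cos θ)`.
The substitution `θ = π - 2 φ` gives `χ - cos θ = (2 / k²) (1 - k² sin² φ)` and
`cos θ = 2 sin² φ - 1`, so with `V = √(1 - k² sin² φ)` the new integrand is a combination of
`1 / V` and `V`. It is symmetric under `φ ↦ π - φ`, which folds `[0, π]` onto `[0, π / 2]`,
the range of the complete elliptic integrals.
-/

open Real MeasureTheory intervalIntegral

theorem integral_neg_eq_two_mul_integral_comp_sub_two_mul (f : ℝ → ℝ) (a : ℝ) :
    ∫ θ in -a..a, f θ = 2 * ∫ φ in 0..a, f (a - 2 * φ) := by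
  rw [integral_comp_sub_mul f two_ne_zero, smul_eq_mul, mul_zero, sub_zero,
    show a - 2 * a = -a by ring, mul_inv_cancel_left₀ two_ne_zero]

theorem integral_eq_two_mul_integral_half_of_comp_sub_eq {f : ℝ → ℝ} {a : ℝ}
    (hf : IntervalIntegrable f volume 0 (a / 2)) (hsymm : ∀ x, f (a - x) = f x) :
    ∫ x in 0..a, f x = 2 * ∫ x in 0..a / 2, f x := by
  have hreflect : ∫ x in a / 2..a, f x = ∫ x in 0..a / 2, f x := by
    simpa [hsymm, show a - a / 2 = a / 2 by ring] using
      (integral_comp_sub_left f a (a := 0) (b := a / 2)).symm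
  have hf' : IntervalIntegrable f volume (a / 2) a := by
    simpa [hsymm, show a - a / 2 = a / 2 by ring] using (hf.comp_sub_left a).symm
  rw [← integral_add_adjacent_intervals hf hf', hreflect, two_mul]

noncomputable def completeEllipticK (k : ℝ) : ℝ :=
  ∫ θ in 0..π / 2, 1 / √(1 - k ^ 2 * sin θ ^ 2)

noncomputable def completeEllipticE (k : ℝ) : ℝ :=
  ∫ θ in 0..π / 2, √(1 - k ^ 2 * sin θ ^ 2)

theorem one_sub_sq_mul_sin_sq_pos {k : ℝ} (hk : k ^ 2 < 1) (x : ℝ) :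
    0 < 1 - k ^ 2 * sin x ^ 2 := by
  nlinarith [sin_sq_le_one x, sq_nonneg (sin x), sq_nonneg k]

theorem sqrt_two_mul_cos_pi_sub_two_mul_div_sqrt {χ k : ℝ} (hk : 0 < k)
    (hχk : k ^ 2 * (1 + χ) = 2) {φ : ℝ} (hφ : 0 ≤ 1 - k ^ 2 * sin φ ^ 2) :
    √2 * (cos (π - 2 * φ) / √(χ - cos (π - 2 * φ)))
      = χ * k * (1 / √(1 - k ^ 2 * sin φ ^ 2)) - 2 / k * √(1 - k ^ 2 * sin φ ^ 2) := by
  set V := √(1 - k ^ 2 * sin φ ^ 2)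
  have hV : V ^ 2 = 1 - k ^ 2 * sin φ ^ 2 := sq_sqrt hφ
  have h2 : √2 ^ 2 = 2 := sq_sqrt zero_le_two
  have hcos : cos (π - 2 * φ) = 2 * sin φ ^ 2 - 1 := by
    rw [cos_pi_sub, cos_two_mul, cos_sq']; ring
  have hsqrt : √(χ - cos (π - 2 * φ)) = √2 * V / k := by
    rw [← sqrt_sq (by positivity : 0 ≤ √2 * V / k)]
    congr 1
    field_simp
    rw [hcos, h2, hV]
    linear_combination hχk
  rw [hsqrt, hcos]
  rcases (sqrt_nonneg _ : 0 ≤ V).eq_or_lt with hV0 | hV0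
  · -- both sides vanish, since `x / 0 = 0`
    simp [show V = 0 from hV0.symm]
  · field_simp
    congr 1
    rw [hV]
    linear_combination -hχk

theorem sqrt_two_mul_integral_cos_div_sqrt_sub_cos {χ : ℝ} (hχ : 1 < χ) :
    √2 * ∫ θ in -π..π, cos θ / √(χ - cos θ)
      = 4 * (χ * √(2 / (1 + χ)) * completeEllipticK √(2 / (1 + χ))
        - 2 / √(2 / (1 + χ)) * completeEllipticE √(2 / (1 + χ))) := by
  set k := √(2 / (1 + χ))
  have hk : 0 < k := by positivity
  have hχk : k ^ 2 * (1 + χ) = 2 := by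
    rw [sq_sqrt (by positivity), div_mul_cancel₀ _ (by positivity)]
  have hk1 : k ^ 2 < 1 := by
    rw [sq_sqrt (by positivity), div_lt_one (by positivity)]; linarith
  set V := fun φ => √(1 - k ^ 2 * sin φ ^ 2)
  have hV : Continuous V := by fun_prop
  have hV_inv : Continuous fun φ => 1 / V φ :=
    continuous_const.div hV fun φ => (sqrt_pos.2 (one_sub_sq_mul_sin_sq_pos hk1 φ)).ne'
  have hK : Continuous fun φ => χ * k * (1 / V φ) := continuous_const.mul hV_inv
  have hE : Continuous fun φ => 2 / k * V φ := continuous_const.mul hV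
  set F := fun φ => χ * k * (1 / V φ) - 2 / k * V φ
  have hF : Continuous F := hK.sub hE
  have hF_symm : ∀ φ, F (π - φ) = F φ := fun φ => by simp only [F, V, sin_pi_sub]
  calc √2 * ∫ θ in -π..π, cos θ / √(χ - cos θ)
      = 2 * ∫ φ in 0..π, √2 * (cos (π - 2 * φ) / √(χ - cos (π - 2 * φ))) := by
        rw [integral_neg_eq_two_mul_integral_comp_sub_two_mul,
          intervalIntegral.integral_const_mul]; ring
    _ = 2 * ∫ φ in 0..π, F φ := by
        simp only [F, V, sqrt_two_mul_cos_pi_sub_two_mul_div_sqrt hk hχk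
          (one_sub_sq_mul_sin_sq_pos hk1 _).le]
    _ = 2 * (2 * ∫ φ in 0..π / 2, F φ) := by
        rw [integral_eq_two_mul_integral_half_of_comp_sub_eq
          (hF.intervalIntegrable _ _) hF_symm]
    _ = _ := by
        rw [integral_sub (hK.intervalIntegrable _ _) (hE.intervalIntegrable _ _),
          intervalIntegral.integral_const_mul, intervalIntegral.integral_const_mul]
        simp only [completeEllipticK, completeEllipticE, V]
        ring

theorem one_lt_sq_add_sq_add_sq_div_two_mul {r r' z z' : ℝ} (hr : 0 < r) (hr' : 0 < r')
    (hne : (r, z) ≠ (r', z')) : 1 < (r ^ 2 + r' ^ 2 + (z - z') ^ 2) / (2 * r * r') := by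
  have hpos : 0 < (r - r') ^ 2 + (z - z') ^ 2 := by
    by_contra! h
    exact hne (Prod.ext (by nlinarith [sq_nonneg (r - r'), sq_nonneg (z - z')])
      (by nlinarith [sq_nonneg (r - r'), sq_nonneg (z - z')]))
  rw [one_lt_div (by positivity)]
  linarith

/-- the `ℓ = 1` modal Green's function of the Laplace kernel in cylindrical
coordinates, expressed via complete elliptic integrals:
`∫_{−π}^{π} cos θ dθ/R(θ) = (2/√(rr')) (χ k K(k) − (2/k) E(k))`. -/
theorem laplace_modal_kernel_elliptic_KE
    (r r' z z' : ℝ) (hr : 0 < r) (hr' : 0 < r') (hne : (r, z) ≠ (r', z'))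
    (R : ℝ → ℝ)
    (hR : R = fun θ => Real.sqrt (r ^ 2 + r' ^ 2 - 2 * r * r' * Real.cos θ + (z - z') ^ 2))
    (χ k : ℝ)
    (hχ : χ = (r ^ 2 + r' ^ 2 + (z - z') ^ 2) / (2 * r * r'))
    (hk : k = Real.sqrt (2 / (1 + χ)))
    (K E : ℝ)
    (hK : K = ∫ θ in (0 : ℝ)..(Real.pi / 2),
      1 / Real.sqrt (1 - k ^ 2 * Real.sin θ ^ 2))
    (hE : E = ∫ θ in (0 : ℝ)..(Real.pi / 2),
      Real.sqrt (1 - k ^ 2 * Real.sin θ ^ 2)) :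
    (∫ θ in (-Real.pi)..Real.pi, Real.cos θ / R θ)
      = 2 / Real.sqrt (r * r') * (χ * k * K - 2 / k * E) := by
  have hχ1 : 1 < χ := hχ ▸ one_lt_sq_add_sq_add_sq_div_two_mul hr hr' hne
  have hR_eq : ∀ θ, R θ = √2 * √(r * r') * √(χ - cos θ) := fun θ => by
    simp only [hR]
    rw [← sqrt_mul zero_le_two, ← sqrt_mul (by positivity), hχ]
    congr 1
    field_simp
    ring
  have hkey := sqrt_two_mul_integral_cos_div_sqrt_sub_cos hχ1
  rw [← hk, show completeEllipticK k = K from hK.symm,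
    show completeEllipticE k = E from hE.symm] at hkey
  have hI : ∫ θ in -π..π, cos θ / R θ
      = (√2 * √(r * r'))⁻¹ * ∫ θ in -π..π, cos θ / √(χ - cos θ) := by
    simp_rw [hR_eq, ← intervalIntegral.integral_const_mul]
    congr 1 with θ
    ring
  have hrr : 0 < √(r * r') := by positivity
  rw [hI]
  generalize χ * k * K - 2 / k * E = X at hkey ⊢
  generalize ∫ θ in -π..π, cos θ / √(χ - cos θ) = I at hkey ⊢
  field_simp
  linear_combination √2 / 2 * hkey - I / 2 * sq_sqrt (zero_le_two : (0:ℝ) ≤ 2)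
end
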